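/- arXiv:0905.3816 — 7 statements merged into one kernel-verified Lean document; each statement's English description precedes it below -/
import Mathlib

section
/- For positive integers a, n and 0 ≤ k ≤ an, the Gaussian binomial coefficient [an choose k]_q is congruent modulo Φ_n(q) to the ordinary binomial coefficient (a choose k/n) if n divides k, and congruent to 0 otherwise. -/
open Polynomial Finset

noncomputable def gbinom : ℕ → ℕ → Polynomial ℤ
  | _, 0 => 1
  | 0, _ + 1 => 0
  | n + 1, k + 1 => gbinom n k + Polynomial.X ^ (k + 1) * gbinom n (k + 1)

lemma gbinom_zero_right (m : ℕ) : gbinom m 0 = 1 := by cases m <;> rfl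

lemma gbinom_succ_succ (m k : ℕ) :
    gbinom (m + 1) (k + 1) = gbinom m k + Polynomial.X ^ (k + 1) * gbinom m (k + 1) := rfl

lemma gbinom_eq_zero : ∀ {m k : ℕ}, m < k → gbinom m k = 0
  | 0, _ + 1, _ => rfl
  | m + 1, k + 1, h => by
      rw [gbinom_succ_succ, gbinom_eq_zero (by omega), gbinom_eq_zero (by omega)]
      ring

lemma gbinom_self : ∀ m, gbinom m m = 1
  | 0 => rfl
  | m + 1 => by
      rw [gbinom_succ_succ, gbinom_self m, gbinom_eq_zero (by omega)]; ring

lemma gbinom_pascal' : ∀ m k : ℕ,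
    gbinom (m + 1) (k + 1) = Polynomial.X ^ (m - k) * gbinom m k + gbinom m (k + 1)
  | 0, 0 => by simp [gbinom_succ_succ, gbinom_zero_right, gbinom_eq_zero]
  | 0, k + 1 => by
      rw [gbinom_succ_succ, gbinom_eq_zero (show 0 < k + 1 by omega),
        gbinom_eq_zero (show 0 < k + 1 + 1 by omega)]
      ring
  | m + 1, 0 => by
      have h1 := gbinom_succ_succ (m + 1) 0
      have h2 := gbinom_pascal' m 0
      have h3 := gbinom_succ_succ m 0
      have hz1 := gbinom_zero_right (m + 1)
      have hz0 := gbinom_zero_right m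
      rw [Nat.sub_zero] at h2
      rw [Nat.sub_zero]
      linear_combination h1 + Polynomial.X * h2 - h3
        + (1 - Polynomial.X ^ (m + 1)) * hz1 + (Polynomial.X ^ (m + 1) - 1) * hz0
  | m + 1, k + 1 => by
      rcases lt_trichotomy k m with h | rfl | h
      · obtain ⟨e, rfl⟩ : ∃ e, m = k + e + 1 := ⟨m - k - 1, by omega⟩
        have h1 := gbinom_succ_succ (k + e + 2) (k + 1)
        have h2 := gbinom_pascal' (k + e + 1) k
        have h3 := gbinom_pascal' (k + e + 1) (k + 1)
        have h4 := gbinom_succ_succ (k + e + 1) k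
        have h5 := gbinom_succ_succ (k + e + 1) (k + 1)
        have e2 : k + e + 1 - k = e + 1 := by omega
        have e3 : k + e + 1 - (k + 1) = e := by omega
        rw [e2] at h2
        rw [e3] at h3
        have e4 : k + e + 1 + 1 - (k + 1) = e + 1 := by omega
        show gbinom (k + e + 1 + 1 + 1) (k + 1 + 1)
            = Polynomial.X ^ (k + e + 1 + 1 - (k + 1)) * gbinom (k + e + 1 + 1) (k + 1)
              + gbinom (k + e + 1 + 1) (k + 1 + 1)
        rw [e4]
        have e5 : k + e + 1 + 1 = k + e + 2 := by omega
        rw [e5]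
        linear_combination h1 + Polynomial.X ^ (k + 2) * h3 - h5 - Polynomial.X ^ (e + 1) * h4 + h2
      · rw [gbinom_self (k + 1 + 1), gbinom_eq_zero (show k + 1 < k + 1 + 1 by omega),
          gbinom_self (k + 1)]
        simp
      · rw [gbinom_eq_zero (show m + 1 + 1 < k + 1 + 1 by omega),
          gbinom_eq_zero (show m + 1 < k + 1 by omega),
          gbinom_eq_zero (show m + 1 < k + 1 + 1 by omega)]
        ring

lemma gbinom_absorb (m k : ℕ) (hk : k ≤ m) :
    (1 - Polynomial.X ^ (k + 1)) * gbinom (m + 1) (k + 1)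
      = (1 - Polynomial.X ^ (m + 1)) * gbinom m k := by
  obtain ⟨d, rfl⟩ := Nat.exists_eq_add_of_le hk
  have h1 := gbinom_succ_succ (k + d) k
  have h2 := gbinom_pascal' (k + d) k
  have e : k + d - k = d := by omega
  rw [e] at h2
  linear_combination (1 - Polynomial.X ^ (k + 1)) * h1
    - (1 - Polynomial.X ^ (k + 1)) * h1 + h1 - Polynomial.X ^ (k + 1) * h2

lemma cyclo_not_dvd_X_pow_sub_one {n j : ℕ} (hj : 0 < j) (hjn : j < n) :
    ¬ Polynomial.cyclotomic n ℤ ∣ (Polynomial.X ^ j - 1 : Polynomial ℤ) := by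
  intro h
  have hn : 0 < n := lt_trans hj hjn
  have hζ : IsPrimitiveRoot (Complex.exp (2 * Real.pi * Complex.I / n)) n :=
    Complex.isPrimitiveRoot_exp n (by omega)
  set ζ := Complex.exp (2 * Real.pi * Complex.I / n) with hζdef
  have hroot : (Polynomial.cyclotomic n ℂ).IsRoot ζ :=
    Polynomial.isRoot_cyclotomic_iff_charZero hn |>.mpr hζ
  obtain ⟨t, ht⟩ := Polynomial.map_dvd (Int.castRingHom ℂ) h
  rw [Polynomial.map_cyclotomic] at ht
  have heval : ζ ^ j - 1 = 0 := by
    have := congrArg (Polynomial.eval ζ) ht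
    simp only [Polynomial.eval_sub, Polynomial.eval_pow, Polynomial.eval_one,
      Polynomial.eval_mul, Polynomial.eval_X, Polynomial.map_sub, Polynomial.map_pow, Polynomial.map_X,
      Polynomial.map_one] at this
    rw [this, hroot.eq_zero, zero_mul]
  have hz : ζ ^ j = 1 := by rwa [sub_eq_zero] at heval
  have : n ∣ j := (hζ.pow_eq_one_iff_dvd j).mp hz
  exact absurd (Nat.le_of_dvd hj this) (by omega)

lemma cyclo_dvd_gbinom {n j : ℕ} (hj : 0 < j) (hjn : j < n) :
    Polynomial.cyclotomic n ℤ ∣ gbinom n j := by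
  obtain ⟨m, rfl⟩ : ∃ m, n = m + 1 := ⟨n - 1, by omega⟩
  obtain ⟨k, rfl⟩ : ∃ k, j = k + 1 := ⟨j - 1, by omega⟩
  have habs := gbinom_absorb m k (by omega)
  have hdvd : Polynomial.cyclotomic (m + 1) ℤ ∣
      (1 - Polynomial.X ^ (k + 1)) * gbinom (m + 1) (k + 1) := by
    rw [habs]
    exact Dvd.dvd.mul_right (dvd_neg.mpr (Polynomial.cyclotomic.dvd_X_pow_sub_one (m + 1) ℤ)
      |>.trans (by rw [neg_sub])) _
  have hprime : Prime (Polynomial.cyclotomic (m + 1) ℤ) :=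
    (Polynomial.cyclotomic.irreducible (by omega)).prime
  rcases hprime.dvd_mul.mp hdvd with h | h
  · exfalso
    apply cyclo_not_dvd_X_pow_sub_one (show 0 < k + 1 by omega) hjn
    have : (Polynomial.X ^ (k + 1) - 1 : Polynomial ℤ) = -(1 - Polynomial.X ^ (k + 1)) := by ring
    rw [this]
    exact dvd_neg.mpr h
  · exact h

lemma cyclo_dvd_X_pow_sub_X_pow_mod {n : ℕ} (hn : 0 < n) (j : ℕ) :
    Polynomial.cyclotomic n ℤ ∣ (Polynomial.X ^ j - Polynomial.X ^ (j % n) : Polynomial ℤ) := by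
  have e : (Polynomial.X : Polynomial ℤ) ^ j
      = ((Polynomial.X ^ n) ^ (j / n)) * Polynomial.X ^ (j % n) := by
    rw [← pow_mul, ← pow_add, Nat.div_add_mod]
  rw [e]
  have h1 : Polynomial.cyclotomic n ℤ ∣ ((Polynomial.X ^ n : Polynomial ℤ) ^ (j / n) - 1) := by
    calc Polynomial.cyclotomic n ℤ ∣ (Polynomial.X ^ n - 1 : Polynomial ℤ) :=
          Polynomial.cyclotomic.dvd_X_pow_sub_one n ℤ
      _ ∣ ((Polynomial.X ^ n : Polynomial ℤ) ^ (j / n) - 1 ^ (j / n)) :=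
          sub_dvd_pow_sub_pow _ _ _
      _ = _ := by rw [one_pow]
  have := h1.mul_right (Polynomial.X ^ (j % n))
  calc Polynomial.cyclotomic n ℤ
      ∣ ((Polynomial.X ^ n : Polynomial ℤ) ^ (j / n) - 1) * Polynomial.X ^ (j % n) := this
    _ = (Polynomial.X ^ n) ^ (j / n) * Polynomial.X ^ (j % n) - Polynomial.X ^ (j % n) := by ring

lemma succ_div_mod_eq (n m : ℕ) (hn : 0 < n) (h : m % n + 1 = n) :
    (m + 1) / n = m / n + 1 ∧ (m + 1) % n = 0 := by
  have h1 := Nat.div_add_mod m n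
  have h2 : n * (m / n + 1) = n * (m / n) + n := by ring
  exact (Nat.div_mod_unique hn).mpr ⟨by omega, hn⟩

lemma succ_div_mod_lt (n m : ℕ) (hn : 0 < n) (h : m % n + 1 < n) :
    (m + 1) / n = m / n ∧ (m + 1) % n = m % n + 1 := by
  have h1 := Nat.div_add_mod m n
  exact (Nat.div_mod_unique hn).mpr ⟨by omega, h⟩

noncomputable def gF (n m k : ℕ) : Polynomial ℤ :=
  (Nat.choose (m / n) (k / n) : Polynomial ℤ) * gbinom (m % n) (k % n)

lemma key_step (n : ℕ) (hn : 0 < n) (m k : ℕ) :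
    Polynomial.cyclotomic n ℤ ∣
      (gF n m k + Polynomial.X ^ (k + 1) * gF n m (k + 1) - gF n (m + 1) (k + 1)) := by
  set Φ := Polynomial.cyclotomic n ℤ
  have hr : m % n < n := Nat.mod_lt _ hn
  have hs : k % n < n := Nat.mod_lt _ hn
  have hXk := cyclo_dvd_X_pow_sub_X_pow_mod hn (k + 1)
  by_cases hr1 : m % n + 1 = n <;> by_cases hs1 : k % n + 1 = n
  · -- r+1 = n, s+1 = n
    have hmd := succ_div_mod_eq n m hn hr1
    have hkd := succ_div_mod_eq n k hn hs1
    have hgs : gbinom (m % n) (k % n) = 1 := by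
      have : m % n = k % n := by omega
      rw [this, gbinom_self]
    rw [gF, gF, gF, hmd.1, hmd.2, hkd.1, hkd.2, hgs, gbinom_zero_right, gbinom_zero_right]
    rw [hkd.2] at hXk
    have hch : ((m / n + 1).choose (k / n + 1) : Polynomial ℤ)
        = ((m / n).choose (k / n) : Polynomial ℤ)
          + ((m / n).choose (k / n + 1) : Polynomial ℤ) := by
      rw [← Nat.cast_add, Nat.choose_succ_succ]
    rw [hch]
    have heq : (((m / n).choose (k / n) : Polynomial ℤ) * 1
        + Polynomial.X ^ (k + 1) * (((m / n).choose (k / n + 1) : Polynomial ℤ) * 1)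
        - (((m / n).choose (k / n) : Polynomial ℤ)
            + ((m / n).choose (k / n + 1) : Polynomial ℤ)) * 1)
        = (Polynomial.X ^ (k + 1) - Polynomial.X ^ 0)
            * ((m / n).choose (k / n + 1) : Polynomial ℤ) := by
      simp only [pow_zero]; ring
    rw [heq]
    exact hXk.mul_right _
  · -- r+1 = n, s+1 < n
    have hmd := succ_div_mod_eq n m hn hr1
    have hkd := succ_div_mod_lt n k hn (by omega)
    rw [gF, gF, gF, hmd.1, hmd.2, hkd.1, hkd.2,
      gbinom_eq_zero (show 0 < k % n + 1 by omega), mul_zero, sub_zero]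
    rw [hkd.2] at hXk
    have hgb : Φ ∣ gbinom n (k % n + 1) := cyclo_dvd_gbinom (by omega) (by omega)
    have hpas := gbinom_succ_succ (m % n) (k % n)
    rw [hr1] at hpas
    have heq : ((m / n).choose (k / n) : Polynomial ℤ) * gbinom (m % n) (k % n)
        + Polynomial.X ^ (k + 1)
          * (((m / n).choose (k / n) : Polynomial ℤ) * gbinom (m % n) (k % n + 1))
        = ((m / n).choose (k / n) : Polynomial ℤ) * gbinom n (k % n + 1)
          + (Polynomial.X ^ (k + 1) - Polynomial.X ^ (k % n + 1))
            * (((m / n).choose (k / n) : Polynomial ℤ) * gbinom (m % n) (k % n + 1)) := by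
      rw [hpas]; ring
    rw [heq]
    exact dvd_add (hgb.mul_left _) (hXk.mul_right _)
  · -- r+1 < n, s+1 = n
    have hmd := succ_div_mod_lt n m hn (by omega)
    have hkd := succ_div_mod_eq n k hn hs1
    rw [gF, gF, gF, hmd.1, hmd.2, hkd.1, hkd.2, gbinom_zero_right, gbinom_zero_right,
      gbinom_eq_zero (show m % n < k % n by omega)]
    rw [hkd.2] at hXk
    have heq : ((m / n).choose (k / n) : Polynomial ℤ) * 0
        + Polynomial.X ^ (k + 1) * (((m / n).choose (k / n + 1) : Polynomial ℤ) * 1)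
        - ((m / n).choose (k / n + 1) : Polynomial ℤ) * 1
        = (Polynomial.X ^ (k + 1) - Polynomial.X ^ 0)
            * ((m / n).choose (k / n + 1) : Polynomial ℤ) := by
      simp only [pow_zero]; ring
    rw [heq]
    exact hXk.mul_right _
  · -- r+1 < n, s+1 < n
    have hmd := succ_div_mod_lt n m hn (by omega)
    have hkd := succ_div_mod_lt n k hn (by omega)
    rw [gF, gF, gF, hmd.1, hmd.2, hkd.1, hkd.2, gbinom_succ_succ]
    rw [hkd.2] at hXk
    have heq : ((m / n).choose (k / n) : Polynomial ℤ) * gbinom (m % n) (k % n)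
        + Polynomial.X ^ (k + 1)
          * (((m / n).choose (k / n) : Polynomial ℤ) * gbinom (m % n) (k % n + 1))
        - ((m / n).choose (k / n) : Polynomial ℤ)
          * (gbinom (m % n) (k % n) + Polynomial.X ^ (k % n + 1) * gbinom (m % n) (k % n + 1))
        = (Polynomial.X ^ (k + 1) - Polynomial.X ^ (k % n + 1))
          * (((m / n).choose (k / n) : Polynomial ℤ) * gbinom (m % n) (k % n + 1)) := by
      ring
    rw [heq]
    exact hXk.mul_right _

lemma gbinom_main (n : ℕ) (hn : 0 < n) : ∀ m k : ℕ,
    Polynomial.cyclotomic n ℤ ∣ (gbinom m k - gF n m k) := by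
  intro m
  induction m with
  | zero =>
    intro k
    cases k with
    | zero => simp [gF, gbinom_zero_right]
    | succ k =>
      rcases Nat.eq_zero_or_pos ((k + 1) / n) with h | h
      · have hmod : 0 < (k + 1) % n := by
          have h2 := Nat.div_add_mod (k + 1) n
          rw [h, Nat.mul_zero] at h2
          omega
        rw [gF, gbinom_eq_zero (show 0 < k + 1 by omega), Nat.zero_mod, Nat.zero_div,
          gbinom_eq_zero hmod, mul_zero, sub_zero]
        exact dvd_zero _
      · rw [gF, gbinom_eq_zero (show 0 < k + 1 by omega), Nat.zero_mod, Nat.zero_div,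
          Nat.choose_eq_zero_of_lt (by omega)]
        simp
  | succ m ih =>
    intro k
    cases k with
    | zero =>
      rw [gbinom_zero_right, gF, Nat.zero_div, Nat.zero_mod, Nat.choose_zero_right,
        gbinom_zero_right]
      simp
    | succ k =>
      have hsplit : gbinom (m + 1) (k + 1) - gF n (m + 1) (k + 1)
          = (gbinom m k - gF n m k)
            + Polynomial.X ^ (k + 1) * (gbinom m (k + 1) - gF n m (k + 1))
            + (gF n m k + Polynomial.X ^ (k + 1) * gF n m (k + 1) - gF n (m + 1) (k + 1)) := by
        rw [gbinom_succ_succ]; ring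
      rw [hsplit]
      exact dvd_add (dvd_add (ih k) ((ih (k + 1)).mul_left _)) (key_step n hn m k)

/-- For positive `a`, `n` and `k ≤ a·n`, `[a·n, k]_q ≡ C(a, k/n)` mod `Φ_n(q)` if `n ∣ k`,
and `[a·n, k]_q ≡ 0` otherwise. -/
theorem stmt_1 (a n k : ℕ) (ha : 0 < a) (hn : 0 < n) (hk : k ≤ a * n) :
    Polynomial.cyclotomic n ℤ ∣
      (gbinom (a * n) k -
        if n ∣ k then (Nat.choose a (k / n) : Polynomial ℤ) else 0) := by
  have h := gbinom_main n hn (a * n) k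
  have hd : a * n / n = a := Nat.mul_div_cancel a hn
  have hm : a * n % n = 0 := Nat.mul_mod_left a n
  rw [gF, hd, hm] at h
  by_cases hdvd : n ∣ k
  · have hk0 : k % n = 0 := Nat.eq_zero_of_dvd_of_lt ((Nat.dvd_mod_iff dvd_rfl).mpr hdvd) (Nat.mod_lt k hn)
    rw [if_pos hdvd]
    rw [hk0] at h
    simpa [gbinom_zero_right] using h
  · have hpos : 0 < k % n := Nat.pos_of_ne_zero (fun hc => hdvd (Nat.dvd_of_mod_eq_zero hc))
    rw [if_neg hdvd]
    rw [gbinom_eq_zero hpos, mul_zero, sub_zero] at h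
    simpa using h
end

section
/- For integers n > 1 and 0 ≤ k ≤ n-1, the congruence [2k choose k]_q ≡ (-1)^k q^{(3k²+k)/2} [n-1-k choose k]_q holds modulo Φ_n(q). -/
open Polynomial Finset

lemma gbinom_mul_prod (m k : ℕ) :
    gbinom m k * ∏ j ∈ Finset.range k, (1 - (X : Polynomial ℤ) ^ (j + 1)) =
      ∏ j ∈ Finset.range k, (1 - (X : Polynomial ℤ) ^ (m - j)) := by
  induction m generalizing k with
  | zero =>
    cases k with
    | zero => simp [gbinom]
    | succ k =>
      rw [show gbinom 0 (k + 1) = 0 from rfl, zero_mul]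
      exact (Finset.prod_eq_zero (Finset.mem_range.mpr (Nat.succ_pos k)) (by simp)).symm
  | succ m ih =>
    cases k with
    | zero => simp [gbinom]
    | succ k =>
      have hN : ∏ j ∈ Finset.range (k + 1), (1 - (X : Polynomial ℤ) ^ (m + 1 - j)) =
          (1 - X ^ (m + 1)) * ∏ j ∈ Finset.range k, (1 - (X : Polynomial ℤ) ^ (m - j)) := by
        rw [Finset.prod_range_succ']
        simp only [Nat.succ_sub_succ_eq_sub, Nat.sub_zero]
        ring
      have ih1 := ih k
      have ih2 := ih (k + 1)
      rw [Finset.prod_range_succ, Finset.prod_range_succ] at ih2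
      rw [hN, show gbinom (m + 1) (k + 1)
          = gbinom m k + X ^ (k + 1) * gbinom m (k + 1) from rfl, Finset.prod_range_succ]
      have key : (∏ j ∈ Finset.range k, (1 - (X : Polynomial ℤ) ^ (m - j))) * X ^ (k + 1 + (m - k)) =
          (∏ j ∈ Finset.range k, (1 - (X : Polynomial ℤ) ^ (m - j))) * X ^ (m + 1) := by
        rcases le_or_gt k m with h | h
        · congr 2
          omega
        · rw [Finset.prod_eq_zero (Finset.mem_range.mpr h) (by simp), zero_mul, zero_mul]
      linear_combination (1 - (X : Polynomial ℤ) ^ (k + 1)) * ih1 + X ^ (k + 1) * ih2 - key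

lemma gauss_aux (k : ℕ) : (∑ j ∈ Finset.range k, j) * 2 + k = k * k := by
  induction k with
  | zero => simp
  | succ m ih =>
    rw [Finset.sum_range_succ]
    have h : (m + 1) * (m + 1) = m * m + m + m + 1 := by ring
    omega

/-- For `n > 1` and `0 ≤ k ≤ n-1`:
`[2k, k]_q ≡ (-1)^k q^((3k²+k)/2) [n-1-k, k]_q (mod Φ_n(q))`. -/
theorem stmt_4 (n k : ℕ) (hn : 1 < n) (hk : k ≤ n - 1) :
    Polynomial.cyclotomic n ℤ ∣
      (gbinom (2 * k) k -
        (-1) ^ k * Polynomial.X ^ ((3 * k ^ 2 + k) / 2) * gbinom (n - 1 - k) k) := by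
  have hn0 : 0 < n := by omega
  have hprime : Prime (cyclotomic n ℤ) :=
    UniqueFactorizationMonoid.irreducible_iff_prime.mp (cyclotomic.irreducible hn0)
  -- non-divisibility of X^m - 1 for 0 < m < n
  have hnd : ∀ m : ℕ, 0 < m → m < n → ¬ (cyclotomic n ℤ ∣ (X : Polynomial ℤ) ^ m - 1) := by
    intro m hm hmn hdvd
    have h1 : (cyclotomic n ℂ) ∣ (X : Polynomial ℂ) ^ m - 1 := by
      have := Polynomial.map_dvd (Int.castRingHom ℂ) hdvd
      simpa [map_cyclotomic] using this
    have hζ : IsPrimitiveRoot (Complex.exp (2 * Real.pi * Complex.I / n)) n :=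
      Complex.isPrimitiveRoot_exp n (by omega)
    have hroot : Polynomial.eval (Complex.exp (2 * Real.pi * Complex.I / n))
        ((X : Polynomial ℂ) ^ m - 1) = 0 :=
      Polynomial.eval_eq_zero_of_dvd_of_eval_eq_zero h1
        (hζ.isRoot_cyclotomic hn0)
    simp only [Polynomial.eval_sub, Polynomial.eval_pow, Polynomial.eval_X,
      Polynomial.eval_one, sub_eq_zero] at hroot
    have h2 := hζ.dvd_of_pow_eq_one m hroot
    have := Nat.le_of_dvd hm h2
    omega
  set I : Ideal (Polynomial ℤ) := Ideal.span {cyclotomic n ℤ} with hI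
  haveI : I.IsPrime := (Ideal.span_singleton_prime hprime.ne_zero).mpr hprime
  haveI : IsDomain (Polynomial ℤ ⧸ I) := Ideal.Quotient.isDomain I
  set π := Ideal.Quotient.mk I with hπ
  set x : Polynomial ℤ ⧸ I := π X with hx
  have hxn : x ^ n = 1 := by
    have h0 : π ((X : Polynomial ℤ) ^ n - 1) = 0 :=
      (Ideal.Quotient.eq_zero_iff_dvd _ _).mpr (cyclotomic.dvd_X_pow_sub_one n ℤ)
    rw [map_sub, map_pow, map_one, sub_eq_zero] at h0
    exact h0
  -- D is nonzero in the quotient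
  have hDne : π (∏ j ∈ Finset.range k, (1 - (X : Polynomial ℤ) ^ (j + 1))) ≠ 0 := by
    intro h0
    rw [Ideal.Quotient.eq_zero_iff_dvd] at h0
    obtain ⟨j, hj, hdvd⟩ := (hprime.dvd_finset_prod_iff _).mp h0
    rw [Finset.mem_range] at hj
    refine hnd (j + 1) (by omega) (by omega) ?_
    have : (X : Polynomial ℤ) ^ (j + 1) - 1 = -(1 - X ^ (j + 1)) := by ring
    rw [this]
    exact dvd_neg.mpr hdvd
  rw [← Ideal.Quotient.eq_zero_iff_dvd, ← hπ, map_sub, sub_eq_zero, map_mul, map_mul,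
    map_pow, map_pow, map_neg, map_one, ← hx]
  -- cancel D
  refine mul_right_cancel₀ hDne ?_
  rw [← map_mul, gbinom_mul_prod,
    mul_assoc ((-1) ^ k * x ^ ((3 * k ^ 2 + k) / 2)), ← map_mul, gbinom_mul_prod]
  simp only [map_prod, map_sub, map_one, map_pow, ← hx]
  rcases lt_or_ge (2 * k) n with hcase | hcase
  · -- main case: 2k < n
    -- rewrite each factor of the RHS product
    have hfac : ∀ j ∈ Finset.range k,
        (1 - x ^ (n - 1 - k - j)) = (-(x ^ (n - 1 - k - j))) * (1 - x ^ (k + 1 + j)) := by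
      intro j hj
      rw [Finset.mem_range] at hj
      have hadd : x ^ (n - 1 - k - j) * x ^ (k + 1 + j) = 1 := by
        rw [← pow_add, show (n - 1 - k - j) + (k + 1 + j) = n by omega, hxn]
      linear_combination -hadd
    rw [Finset.prod_congr rfl hfac, Finset.prod_mul_distrib]
    have hrefl : ∏ j ∈ Finset.range k, (1 - x ^ (2 * k - j)) =
        ∏ j ∈ Finset.range k, (1 - x ^ (k + 1 + j)) := by
      rw [← Finset.prod_range_reflect (fun j => 1 - x ^ (k + 1 + j)) k]
      refine Finset.prod_congr rfl fun j hj => ?_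
      rw [Finset.mem_range] at hj
      congr 2
      omega
    rw [hrefl]
    have hscal : ((-1 : Polynomial ℤ ⧸ I)) ^ k * x ^ ((3 * k ^ 2 + k) / 2) *
        ∏ j ∈ Finset.range k, (-(x ^ (n - 1 - k - j))) = 1 := by
      have h1 : ∏ j ∈ Finset.range k, (-(x ^ (n - 1 - k - j))) =
          (-1 : Polynomial ℤ ⧸ I) ^ k * ∏ j ∈ Finset.range k, x ^ (n - 1 - k - j) := by
        rw [Finset.prod_congr rfl
          (fun j _ => (neg_one_mul (x ^ (n - 1 - k - j))).symm),
          Finset.prod_mul_distrib, Finset.prod_const, Finset.card_range]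
      have h2 : (∏ j ∈ Finset.range k, x ^ (n - 1 - k - j)) *
          ∏ j ∈ Finset.range k, x ^ (k + 1 + j) = 1 := by
        rw [← Finset.prod_mul_distrib]
        rw [Finset.prod_congr rfl (fun j hj => ?_), Finset.prod_const_one]
        rw [Finset.mem_range] at hj
        rw [← pow_add, show (n - 1 - k - j) + (k + 1 + j) = n by omega, hxn]
      have h3 : x ^ ((3 * k ^ 2 + k) / 2) = ∏ j ∈ Finset.range k, x ^ (k + 1 + j) := by
        rw [Finset.prod_pow_eq_pow_sum]
        congr 1
        have hg := gauss_aux k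
        have hsum : ∑ j ∈ Finset.range k, (k + 1 + j)
            = k * (k + 1) + ∑ j ∈ Finset.range k, j := by
          rw [Finset.sum_add_distrib, Finset.sum_const, Finset.card_range, smul_eq_mul]
        have hexp : 3 * k ^ 2 + k = (k * (k + 1) + ∑ j ∈ Finset.range k, j) * 2 := by
          nlinarith [hg]
        omega
      rw [h1, h3, mul_mul_mul_comm, mul_comm (∏ j ∈ Finset.range k, x ^ (k + 1 + j)), h2,
        mul_one, ← mul_pow]
      norm_num
    rw [← mul_assoc, hscal, one_mul]
  · -- degenerate case: n ≤ 2k, both sides vanish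
    have hk1 : 1 ≤ k := by omega
    have hL : ∏ j ∈ Finset.range k, (1 - x ^ (2 * k - j)) = 0 := by
      refine Finset.prod_eq_zero (Finset.mem_range.mpr (show 2 * k - n < k by omega)) ?_
      rw [show 2 * k - (2 * k - n) = n by omega, hxn, sub_self]
    have hR : ∏ j ∈ Finset.range k, (1 - x ^ (n - 1 - k - j)) = 0 := by
      refine Finset.prod_eq_zero (Finset.mem_range.mpr (show n - 1 - k < k by omega)) ?_
      rw [show n - 1 - k - (n - 1 - k) = 0 by omega, pow_zero, sub_self]
    rw [hL, hR, mul_zero]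
end

section
/- For integers n > 1 and 0 ≤ k ≤ n-2, the congruence [2k choose k+1]_q ≡ (-1)^{k+1} q^{(3k²+3k)/2} [n-k choose k+1]_q holds modulo Φ_n(q), and for k = n-1 one has [2k choose k+1]_q ≡ 1 (mod Φ_n(q)). -/
/-!
Evaluate at a primitive `n`-th root of unity `ζ`, where `Φ_n ∣ p ↔ p(ζ) = 0`. There
`[n]_ζ = 0`, `[j]_ζ ≠ 0` for `0 < j < n`, and `ζ^j [n - j]_ζ = -[j]_ζ`. Writing
`[m, r]_q [r]_q! = [m]_q [m-1]_q ⋯ [m-r+1]_q`, the reflection `j ↦ n - j` turns the numerator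
`[n-k] ⋯ [n-2k]` of `[n-k, k+1]` into `± ζ^(…)` times the numerator `[2k] ⋯ [k]` of `[2k, k+1]`,
with exponent `k + (k+1) + ⋯ + 2k = (3k² + 3k)/2`; if `2k ≥ n` both numerators vanish. For `k = n - 1`,
symmetry gives `[2n-2, n] = [2n-2, n-2]`, whose numerator `[2n-2] ⋯ [n+1]` is congruent to
`[n-2]!` because `[n + j]_ζ = [j]_ζ`.
-/

open Polynomial Finset

noncomputable def qint (m : ℕ) : ℤ[X] := ∑ i ∈ range m, X ^ i

noncomputable def qfact (m : ℕ) : ℤ[X] := ∏ i ∈ range m, qint (i + 1)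

theorem qint_add (a b : ℕ) : qint (a + b) = qint a + X ^ a * qint b := by
  simp [qint, sum_range_add, pow_add, mul_sum]

theorem qfact_succ (m : ℕ) : qfact (m + 1) = qfact m * qint (m + 1) :=
  prod_range_succ _ _

theorem qfact_ne_zero (m : ℕ) : qfact m ≠ 0 :=
  prod_ne_zero_iff.mpr fun i _ h =>
    Nat.cast_add_one_ne_zero (R := ℤ) i (by simpa [qint] using congrArg (eval 1) h)

theorem qfact_eq_prod_range_sub (m : ℕ) : qfact m = ∏ i ∈ range m, qint (m - i) := by
  rw [qfact, ← prod_range_reflect]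
  refine prod_congr rfl fun i hi => ?_
  rw [mem_range] at hi
  congr 1
  omega

theorem qfact_eq_prod_mul_qfact {m r : ℕ} (h : r ≤ m) :
    qfact m = (∏ i ∈ range r, qint (m - i)) * qfact (m - r) := by
  obtain ⟨s, rfl⟩ := Nat.exists_eq_add_of_le h
  simp only [qfact_eq_prod_range_sub, prod_range_add, Nat.add_sub_cancel_left, Nat.add_sub_add_left]

-- For `r > m` both sides vanish, the right one through the factor `qint 0 = 0`.
theorem gbinom_mul_qfact (m r : ℕ) : gbinom m r * qfact r = ∏ i ∈ range r, qint (m - i) := by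
  induction m generalizing r with
  | zero =>
    cases r with
    | zero => simp [gbinom, qfact]
    | succ r => simp [gbinom, qint]
  | succ m ih =>
    cases r with
    | zero => simp [gbinom, qfact]
    | succ r =>
      set P := ∏ i ∈ range r, qint (m - i)
      have h1 := ih r
      have h2 := ih (r + 1)
      rw [qfact_succ, prod_range_succ] at h2
      have hP : P * qint (m + 1) = P * (qint (r + 1) + X ^ (r + 1) * qint (m - r)) := by
        rcases le_or_gt r m with hrm | hrm
        · rw [← qint_add]
          congr 2
          omega
        · have hP0 : P = 0 := prod_eq_zero (mem_range.mpr hrm) (by simp [qint])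
          rw [hP0, zero_mul, zero_mul]
      rw [gbinom, qfact_succ, prod_range_succ']
      simp only [Nat.add_sub_add_right, Nat.sub_zero]
      linear_combination qint (r + 1) * h1 + X ^ (r + 1) * h2 - hP

theorem gbinom_symm {m r : ℕ} (h : r ≤ m) : gbinom m (m - r) = gbinom m r := by
  apply mul_right_cancel₀ (mul_ne_zero (qfact_ne_zero r) (qfact_ne_zero (m - r)))
  have h₁ := qfact_eq_prod_mul_qfact (Nat.sub_le m r)
  have h₂ := qfact_eq_prod_mul_qfact h
  rw [Nat.sub_sub_self h, ← gbinom_mul_qfact] at h₁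
  rw [← gbinom_mul_qfact] at h₂
  linear_combination h₂ - h₁

theorem Finset.sum_range_succ_self_add (k : ℕ) :
    ∑ i ∈ range (k + 1), (k + i) = (3 * k ^ 2 + 3 * k) / 2 := by
  have h := sum_range_id_mul_two (k + 1)
  rw [Nat.add_sub_cancel] at h
  refine (Nat.div_eq_of_eq_mul_left two_pos ?_).symm
  rw [sum_add_distrib, sum_const, card_range, smul_eq_mul, add_mul, h]
  ring

namespace IsPrimitiveRoot

section CommRing

variable {K : Type*} [CommRing K] {n : ℕ} {ζ : K}

theorem aeval_qint_ne_zero (hζ : IsPrimitiveRoot ζ n) {m : ℕ} (h₀ : 0 < m) (hm : m < n) :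
    aeval ζ (qint m) ≠ 0 := by
  intro h
  refine hζ.pow_ne_one_of_pos_of_lt h₀.ne' hm (sub_eq_zero.mp ?_)
  rw [← geom_sum_mul]
  simp_all [qint]

variable [IsDomain K]

theorem aeval_qint_self (hζ : IsPrimitiveRoot ζ n) (hn : 1 < n) : aeval ζ (qint n) = 0 := by
  simpa [qint] using hζ.geom_sum_eq_zero hn

theorem aeval_qfact_ne_zero (hζ : IsPrimitiveRoot ζ n) {m : ℕ} (hm : m < n) :
    aeval ζ (qfact m) ≠ 0 := by
  rw [qfact, map_prod]
  exact prod_ne_zero_iff.mpr fun i hi =>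
    hζ.aeval_qint_ne_zero i.succ_pos (by rw [mem_range] at hi; omega)

theorem aeval_qint_add_self (hζ : IsPrimitiveRoot ζ n) (hn : 1 < n) (j : ℕ) :
    aeval ζ (qint (n + j)) = aeval ζ (qint j) := by
  simp [qint_add, hζ.aeval_qint_self hn, hζ.pow_eq_one]

theorem pow_mul_aeval_qint_sub (hζ : IsPrimitiveRoot ζ n) (hn : 1 < n) {j : ℕ} (hj : j ≤ n) :
    ζ ^ j * aeval ζ (qint (n - j)) = -aeval ζ (qint j) := by
  have h := congrArg (aeval ζ) (qint_add j (n - j))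
  rw [Nat.add_sub_cancel' hj, hζ.aeval_qint_self hn, map_add, map_mul, map_pow, aeval_X] at h
  linear_combination -h

theorem pow_sum_mul_prod_aeval_qint_sub (hζ : IsPrimitiveRoot ζ n) (hn : 1 < n) {ι : Type*}
    (s : Finset ι) (f : ι → ℕ) (hf : ∀ i ∈ s, f i ≤ n) :
    ζ ^ (∑ i ∈ s, f i) * ∏ i ∈ s, aeval ζ (qint (n - f i)) =
      (-1) ^ #s * ∏ i ∈ s, aeval ζ (qint (f i)) := by
  rw [← prod_pow_eq_pow_sum, ← prod_mul_distrib,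
    prod_congr rfl fun i hi => hζ.pow_mul_aeval_qint_sub hn (hf i hi), prod_neg]

theorem aeval_gbinom_two_mul (hζ : IsPrimitiveRoot ζ n) {k : ℕ} (hk : k + 2 ≤ n) :
    aeval ζ (gbinom (2 * k) (k + 1)) =
      (-1) ^ (k + 1) * ζ ^ ((3 * k ^ 2 + 3 * k) / 2) * aeval ζ (gbinom (n - k) (k + 1)) := by
  have hn : 1 < n := by omega
  apply mul_right_cancel₀ (hζ.aeval_qfact_ne_zero (m := k + 1) (by omega))
  rw [mul_assoc, ← map_mul, ← map_mul, gbinom_mul_qfact, gbinom_mul_qfact, map_prod, map_prod]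
  rcases le_or_gt n (2 * k) with hnk | hnk
  · -- the left numerator contains `[n]`, the right one `[0]`
    rw [prod_eq_zero (i := 2 * k - n) (mem_range.mpr (by omega))
        (by rw [Nat.sub_sub_self hnk, hζ.aeval_qint_self hn]),
      prod_eq_zero (i := n - k) (mem_range.mpr (by omega)) (by simp [qint]), mul_zero]
  · have hreflect : ∏ i ∈ range (k + 1), aeval ζ (qint (2 * k - i)) =
        ∏ i ∈ range (k + 1), aeval ζ (qint (k + i)) := by
      rw [← prod_range_reflect]
      refine prod_congr rfl fun i hi => ?_
      rw [mem_range] at hi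
      congr 2
      omega
    have hsub := hζ.pow_sum_mul_prod_aeval_qint_sub hn (range (k + 1)) (k + ·)
      fun i hi => by rw [mem_range] at hi; omega
    rw [sum_range_succ_self_add, card_range] at hsub
    have hsign : ((-1 : K) ^ (k + 1)) ^ 2 = 1 := by
      rw [← pow_mul, pow_mul', neg_one_sq, one_pow]
    simp only [hreflect, Nat.sub_sub]
    linear_combination -(-1) ^ (k + 1) * hsub -
      (∏ i ∈ range (k + 1), aeval ζ (qint (k + i))) * hsign

theorem aeval_gbinom_two_mul_sub_two (hζ : IsPrimitiveRoot ζ n) (hn : 1 < n) :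
    aeval ζ (gbinom (2 * (n - 1)) n) = 1 := by
  rw [← gbinom_symm (by omega : n ≤ 2 * (n - 1)), show 2 * (n - 1) - n = n - 2 by omega]
  apply mul_right_cancel₀ (hζ.aeval_qfact_ne_zero (m := n - 2) (by omega))
  rw [← map_mul, gbinom_mul_qfact, one_mul, qfact_eq_prod_range_sub, map_prod, map_prod]
  refine prod_congr rfl fun i hi => ?_
  rw [mem_range] at hi
  rw [show 2 * (n - 1) - i = n + (n - 2 - i) by omega, hζ.aeval_qint_add_self hn]

end CommRing

theorem cyclotomic_dvd_iff_aeval_eq_zero {K : Type*} [Field K] [CharZero K] {n : ℕ} {ζ : K}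
    (hζ : IsPrimitiveRoot ζ n) (hn : 0 < n) (p : ℤ[X]) :
    cyclotomic n ℤ ∣ p ↔ aeval ζ p = 0 := by
  rw [cyclotomic_eq_minpoly hζ hn, minpoly.isIntegrallyClosed_dvd_iff (hζ.isIntegral hn)]

end IsPrimitiveRoot

/-- For `n > 1`: for `0 ≤ k ≤ n-2`,
`[2k, k+1]_q ≡ (-1)^(k+1) q^((3k²+3k)/2) [n-k, k+1]_q (mod Φ_n(q))`,
and for `k = n-1`, `[2k, k+1]_q ≡ 1 (mod Φ_n(q))`. -/
theorem stmt_5 (n : ℕ) (hn : 1 < n) :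
    (∀ k : ℕ, k ≤ n - 2 →
      Polynomial.cyclotomic n ℤ ∣
        (gbinom (2 * k) (k + 1) -
          (-1) ^ (k + 1) * Polynomial.X ^ ((3 * k ^ 2 + 3 * k) / 2) *
            gbinom (n - k) (k + 1))) ∧
    Polynomial.cyclotomic n ℤ ∣ (gbinom (2 * (n - 1)) ((n - 1) + 1) - 1) := by
  have hζ := Complex.isPrimitiveRoot_exp n (by omega)
  simp only [hζ.cyclotomic_dvd_iff_aeval_eq_zero (by omega), map_sub, map_mul, map_pow, map_neg,
    map_one, aeval_X, sub_eq_zero, Nat.sub_add_cancel hn.le]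
  exact ⟨fun k hk => hζ.aeval_gbinom_two_mul (by omega), hζ.aeval_gbinom_two_mul_sub_two hn⟩
end

section
/- For any prime p, any integer a > 0, and any integer d with |d| ≤ p^a, the congruence ∑_{k=0}^{p^a - 1} binom(2k, k+d) ≡ ((p^a - |d|)/3) (mod p) holds, where ((m)/3) is the Legendre symbol mod 3. -/
/-!
Write `S(d) = ∑_{k < n} C(2k, k + d)` for `d ≥ 0`; since `C(2k, k - d) = C(2k, k + d)`, the sum
only depends on `|d|`. Applying Pascal's rule twice to `C(2k + 2, k + d + 2)` and summing over
`k` telescopes to `S(d) + S(d + 1) + S(d + 2) = C(2n, n + d + 1)`. For `n = p^a` the right-hand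
side is divisible by `p` whenever `d + 2 ≤ n`, by Vandermonde's identity for
`C(p^a + p^a, ·)`. Together with `S(n) = 0` and `S(n - 1) = 1` this three-term recurrence pins
down `S(n - e)` modulo `p` as the period-three sequence `0, 1, -1, …`, i.e. `((e)/3)`.
-/

open Finset

/-- The Legendre symbol mod 3. -/
def leg3 (m : ℤ) : ℤ := if m % 3 = 0 then 0 else if m % 3 = 1 then 1 else -1

/-- Ordinary binomial coefficient `C(m, j)` with integer lower index
(zero when `j < 0` or `j > m`). -/
def chooseZ (m : ℕ) (j : ℤ) : ℕ := if 0 ≤ j then m.choose j.toNat else 0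

lemma leg3_add_leg3_add_one_add_leg3_add_two (e : ℤ) :
    leg3 e + leg3 (e + 1) + leg3 (e + 2) = 0 := by
  unfold leg3; split_ifs <;> omega

lemma modEq_leg3_of_sum_three_modEq_zero {m : ℤ} {N : ℕ} (g : ℕ → ℤ)
    (h₀ : g 0 ≡ 0 [ZMOD m]) (h₁ : g 1 ≡ 1 [ZMOD m])
    (hrec : ∀ e, e + 2 ≤ N → g e + g (e + 1) + g (e + 2) ≡ 0 [ZMOD m]) :
    ∀ e ≤ N, g e ≡ leg3 e [ZMOD m] := by
  intro e
  induction e using Nat.strong_induction_on with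
  | _ e ih =>
    intro he
    match e with
    | 0 => simpa [leg3] using h₀
    | 1 => simpa [leg3] using h₁
    | e + 2 =>
      have h := ((hrec e he).sub (ih (e + 1) (by omega) (by omega))).sub
        (ih e (by omega) (by omega))
      have hleg := leg3_add_leg3_add_one_add_leg3_add_two e
      push_cast at h ⊢
      convert h using 1 <;> linarith

lemma chooseZ_two_mul_add (k : ℕ) (d : ℤ) :
    chooseZ (2 * k) (k + d) = (2 * k).choose (k + d.natAbs) := by
  unfold chooseZ
  split_ifs with h
  · rcases Int.natAbs_eq d with hd | hd
    · congr 1; omega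
    · rw [← Nat.choose_symm (by omega)]; congr 1; omega
  · exact (Nat.choose_eq_zero_of_lt (by omega)).symm

lemma Nat.choose_add_two_add_two (m j : ℕ) :
    (m + 2).choose (j + 2) = m.choose j + 2 * m.choose (j + 1) + m.choose (j + 2) := by
  rw [Nat.choose_succ_succ', Nat.choose_succ_succ', Nat.choose_succ_succ']
  ring

lemma sum_range_choose_two_mul_add_three (n d : ℕ) :
    ∑ k ∈ range n, (2 * k).choose (k + d) + ∑ k ∈ range n, (2 * k).choose (k + (d + 1))
      + ∑ k ∈ range n, (2 * k).choose (k + (d + 2)) = (2 * n).choose (n + d + 1) := by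
  have hpascal : ∀ k, (2 * (k + 1)).choose (k + 1 + (d + 1)) = (2 * k).choose (k + d)
      + 2 * (2 * k).choose (k + (d + 1)) + (2 * k).choose (k + (d + 2)) := fun k => by
    rw [show 2 * (k + 1) = 2 * k + 2 by ring, show k + 1 + (d + 1) = k + d + 2 by ring,
      Nat.choose_add_two_add_two]
    ring_nf
  have hshift := sum_range_succ' (fun k => (2 * k).choose (k + (d + 1))) n
  rw [sum_range_succ] at hshift
  simp only [hpascal, sum_add_distrib, ← mul_sum, mul_zero, zero_add,
    Nat.choose_zero_succ] at hshift
  rw [show n + d + 1 = n + (d + 1) by ring]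
  omega

lemma Nat.Prime.dvd_choose_two_mul_pow {p a j : ℕ} (hp : p.Prime) (hj₁ : p ^ a < j)
    (hj₂ : j < 2 * p ^ a) : p ∣ (2 * p ^ a).choose j := by
  rw [two_mul, Nat.add_choose_eq]
  refine dvd_sum fun st hst => ?_
  rw [HasAntidiagonal.mem_antidiagonal] at hst
  by_cases hs : st.1 = 0 ∨ st.1 = p ^ a
  · exact dvd_mul_of_dvd_right (hp.dvd_choose_pow (by omega) (by omega)) _
  · exact dvd_mul_of_dvd_left (hp.dvd_choose_pow (by omega) (by omega)) _

lemma sum_range_choose_two_mul_add_self (n : ℕ) :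
    ∑ k ∈ range n, (2 * k).choose (k + n) = 0 :=
  sum_eq_zero fun k hk => Nat.choose_eq_zero_of_lt (by simp at hk; omega)

lemma sum_range_succ_choose_two_mul_add_self (n : ℕ) :
    ∑ k ∈ range (n + 1), (2 * k).choose (k + n) = 1 := by
  rw [sum_range_succ, sum_eq_zero fun k hk => Nat.choose_eq_zero_of_lt (by simp at hk; omega),
    ← two_mul, Nat.choose_self]

lemma sum_range_choose_two_mul_add_modEq_leg3 {p a : ℕ} (hp : p.Prime) :
    ∀ e ≤ p ^ a, ((∑ k ∈ range (p ^ a), (2 * k).choose (k + (p ^ a - e)) : ℕ) : ℤ) ≡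
      leg3 e [ZMOD p] := by
  have hpa : 0 < p ^ a := pow_pos hp.pos a
  refine modEq_leg3_of_sum_three_modEq_zero _ ?_ ?_ fun e he => ?_
  · simp [sum_range_choose_two_mul_add_self]
  · obtain ⟨n, hn⟩ : ∃ n, p ^ a = n + 1 := ⟨p ^ a - 1, by omega⟩
    simp [hn, sum_range_succ_choose_two_mul_add_self]
  · have h := sum_range_choose_two_mul_add_three (p ^ a) (p ^ a - (e + 2))
    rw [show p ^ a - (e + 2) + 1 = p ^ a - (e + 1) by omega,
      show p ^ a - (e + 2) + 2 = p ^ a - e by omega] at h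
    have hdvd : p ∣ (2 * p ^ a).choose (p ^ a + (p ^ a - (e + 2)) + 1) :=
      hp.dvd_choose_two_mul_pow (by omega) (by omega)
    rw [Int.modEq_zero_iff_dvd]
    exact Int.natCast_dvd_natCast.2 (by convert hdvd using 1; omega)

theorem stmt_10_general (p : ℕ) (hp : p.Prime) (a : ℕ) (d : ℤ)
    (hd : d.natAbs ≤ p ^ a) :
    (∑ k ∈ Finset.range (p ^ a), (chooseZ (2 * k) (k + d) : ℤ)) ≡
      leg3 ((p : ℤ) ^ a - d.natAbs) [ZMOD p] := by
  have h := sum_range_choose_two_mul_add_modEq_leg3 hp (p ^ a - d.natAbs) (Nat.sub_le _ _)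
  rw [Nat.sub_sub_self hd, Nat.cast_sub hd, Nat.cast_pow, Nat.cast_sum] at h
  simpa only [chooseZ_two_mul_add] using h

/-- For a prime `p`, `a > 0` and `|d| ≤ p^a`:
`∑_{k=0}^{p^a-1} C(2k, k+d) ≡ ((p^a - |d|)/3) (mod p)`. -/
theorem stmt_10 (p : ℕ) (hp : p.Prime) (a : ℕ) (ha : 0 < a) (d : ℤ)
    (hd : d.natAbs ≤ p ^ a) :
    (∑ k ∈ Finset.range (p ^ a), (chooseZ (2 * k) (k + d) : ℤ)) ≡
      leg3 ((p : ℤ) ^ a - d.natAbs) [ZMOD p] :=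
  stmt_10_general p hp a d hd
end

section
/- For any prime p and integer a > 0, 1 + 2·∑_{k=1}^{p^a - 1} binom(2k-1, k) ≡ ((p^a)/3) (mod p), equivalently ∑_{k=0}^{p^a - 1} binom(2k, k) ≡ ((p^a)/3) (mod p). -/
private lemma leg3_mul (m n : ℤ) : leg3 (m * n) = leg3 m * leg3 n := by
  have hm : m % 3 = 0 ∨ m % 3 = 1 ∨ m % 3 = 2 := by omega
  have hn : n % 3 = 0 ∨ n % 3 = 1 ∨ n % 3 = 2 := by omega
  have h : (m * n) % 3 = (m % 3) * (n % 3) % 3 := Int.mul_emod m n 3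
  unfold leg3
  rcases hm with h1 | h1 | h1 <;> rcases hn with h2 | h2 | h2 <;>
    rw [h, h1, h2] <;> norm_num

private lemma leg3_pow (m : ℤ) (a : ℕ) : leg3 (m ^ a) = leg3 m ^ a := by
  induction a with
  | zero => simp [leg3]
  | succ n ih => rw [pow_succ, leg3_mul, ih, pow_succ]

/-- The partial sum of central binomial coefficients mod `p`, up to `p/2`. -/
private def Sval (p : ℕ) : ZMod p :=
  ∑ r ∈ Finset.range p, if 2 * r < p then ((2 * r).choose r : ZMod p) else 0

/-- Lucas-type evaluation of a single central binomial coefficient. -/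
private lemma central_lucas {p : ℕ} (hp : p.Prime) (q r : ℕ) (hr : r < p) :
    ((2 * (q * p + r)).choose (q * p + r) : ZMod p) =
      (if 2 * r < p then ((2 * r).choose r : ZMod p) else 0) *
        ((2 * q).choose q : ZMod p) := by
  haveI := Fact.mk hp
  have hmod : (q * p + r) % p = r := by
    rw [Nat.add_comm, Nat.add_mul_mod_self_right, Nat.mod_eq_of_lt hr]
  have hdiv : (q * p + r) / p = q := by
    rw [Nat.add_comm, Nat.add_mul_div_right _ _ hp.pos, Nat.div_eq_of_lt hr, Nat.zero_add]
  have lucas := Choose.choose_modEq_choose_mod_mul_choose_div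
    (p := p) (n := 2 * (q * p + r)) (k := q * p + r)
  have lucas' : ((2 * (q * p + r)).choose (q * p + r) : ZMod p) =
      (((2 * (q * p + r)) % p).choose ((q * p + r) % p) : ZMod p) *
      (((2 * (q * p + r)) / p).choose ((q * p + r) / p) : ZMod p) := by
    have := (ZMod.intCast_eq_intCast_iff _ _ _).mpr lucas
    push_cast at this
    exact_mod_cast this
  by_cases h2r : 2 * r < p
  · have hmod2 : (2 * (q * p + r)) % p = 2 * r := by
      rw [show 2 * (q * p + r) = 2 * r + (2 * q) * p by ring,
        Nat.add_mul_mod_self_right, Nat.mod_eq_of_lt h2r]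
    have hdiv2 : (2 * (q * p + r)) / p = 2 * q := by
      rw [show 2 * (q * p + r) = 2 * r + (2 * q) * p by ring,
        Nat.add_mul_div_right _ _ hp.pos, Nat.div_eq_of_lt h2r, Nat.zero_add]
    rw [lucas', hmod, hdiv, hmod2, hdiv2, if_pos h2r]
  · have h2r' : p ≤ 2 * r := le_of_not_gt h2r
    have hmod2 : (2 * (q * p + r)) % p = 2 * r - p := by
      rw [show 2 * (q * p + r) = (2 * r - p) + (2 * q + 1) * p by
        have := hp.pos; ring_nf; omega,
        Nat.add_mul_mod_self_right, Nat.mod_eq_of_lt (by omega)]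
    have hzero : (2 * r - p).choose r = 0 :=
      Nat.choose_eq_zero_of_lt (by omega)
    rw [lucas', hmod, hmod2, hzero, if_neg h2r]
    simp

private lemma sum_central_pow {p : ℕ} (hp : p.Prime) (a : ℕ) :
    (∑ k ∈ Finset.range (p ^ a), ((2 * k).choose k : ZMod p)) = Sval p ^ a := by
  induction a with
  | zero => simp
  | succ a ih =>
    have hsplit : (∑ k ∈ Finset.range (p ^ (a + 1)), ((2 * k).choose k : ZMod p)) =
        ∑ qr ∈ Finset.range (p ^ a) ×ˢ Finset.range p,
          ((2 * (qr.1 * p + qr.2)).choose (qr.1 * p + qr.2) : ZMod p) := by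
      rw [pow_succ]
      refine (Finset.sum_nbij' (i := fun qr : ℕ × ℕ => qr.1 * p + qr.2)
        (j := fun k => (k / p, k % p)) ?_ ?_ ?_ ?_ ?_).symm
      · rintro ⟨q, r⟩ hqr
        simp only [Finset.mem_product, Finset.mem_range] at hqr ⊢
        calc q * p + r < q * p + p := by omega
          _ = (q + 1) * p := by ring
          _ ≤ p ^ a * p := Nat.mul_le_mul_right _ (by omega)
      · intro k hk
        simp only [Finset.mem_product, Finset.mem_range] at hk ⊢
        exact ⟨(Nat.div_lt_iff_lt_mul hp.pos).mpr hk, Nat.mod_lt _ hp.pos⟩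
      · rintro ⟨q, r⟩ hqr
        simp only [Finset.mem_product, Finset.mem_range] at hqr
        have hmod : (q * p + r) % p = r := by
          rw [Nat.add_comm, Nat.add_mul_mod_self_right, Nat.mod_eq_of_lt hqr.2]
        have hdiv : (q * p + r) / p = q := by
          rw [Nat.add_comm, Nat.add_mul_div_right _ _ hp.pos,
            Nat.div_eq_of_lt hqr.2, Nat.zero_add]
        simp [hmod, hdiv]
      · intro k hk
        show k / p * p + k % p = k
        rw [Nat.mul_comm]
        exact Nat.div_add_mod k p
      · rintro ⟨q, r⟩ hqr
        rfl
    rw [hsplit, Finset.sum_product]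
    have : ∀ q ∈ Finset.range (p ^ a),
        (∑ r ∈ Finset.range p,
          ((2 * (q * p + r)).choose (q * p + r) : ZMod p)) =
        Sval p * ((2 * q).choose q : ZMod p) := by
      intro q hq
      rw [Sval, Finset.sum_mul]
      refine Finset.sum_congr rfl fun r hr => ?_
      rw [central_lucas hp q r (Finset.mem_range.mp hr)]
    rw [Finset.sum_congr rfl this, ← Finset.mul_sum, ih, pow_succ]
    ring


private lemma factorial_two_mul_eq (s : ℕ) :
    Nat.factorial (2 * s) =
      2 ^ s * Nat.factorial s * ∏ i ∈ Finset.range s, (2 * i + 1) := by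
  induction s with
  | zero => simp
  | succ n ih =>
    rw [show 2 * (n + 1) = (2 * n + 1) + 1 by ring, Nat.factorial_succ,
      Nat.factorial_succ, ih, Finset.prod_range_succ, Nat.factorial_succ]
    ring

private lemma central_eq {p : ℕ} (hp : p.Prime) (hp2 : p ≠ 2) {r : ℕ}
    (hr : r ≤ p / 2) :
    ((2 * r).choose r : ZMod p) = (-4) ^ r * ((p / 2).choose r : ZMod p) := by
  haveI := Fact.mk hp
  have hodd : p % 2 = 1 := hp.eq_two_or_odd.resolve_left hp2
  have hmp : 2 * (p / 2) + 1 = p := by omega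
  have hfac : ((Nat.factorial r : ℕ) : ZMod p) ≠ 0 := by
    rw [Ne, ZMod.natCast_eq_zero_iff]
    intro h
    have := (Nat.Prime.dvd_factorial hp).mp h
    omega
  apply mul_right_cancel₀ hfac
  have hchoose : (2 * r).choose r * Nat.factorial r * Nat.factorial r =
      Nat.factorial (2 * r) := by
    have h := Nat.choose_mul_factorial_mul_factorial (show r ≤ 2 * r by omega)
    rwa [show 2 * r - r = r by omega] at h
  have h1 : ((2 * r).choose r : ZMod p) * (Nat.factorial r : ZMod p) *
      (Nat.factorial r : ZMod p) =
      2 ^ r * (Nat.factorial r : ZMod p) *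
        ∏ i ∈ Finset.range r, (2 * i + 1 : ZMod p) := by
    have h := congrArg (Nat.cast : ℕ → ZMod p) (hchoose.trans (factorial_two_mul_eq r))
    push_cast at h
    exact h
  have h1' : ((2 * r).choose r : ZMod p) * (Nat.factorial r : ZMod p) =
      2 ^ r * ∏ i ∈ Finset.range r, (2 * i + 1 : ZMod p) :=
    mul_right_cancel₀ hfac (by linear_combination h1)
  have h2 : ((p / 2).choose r : ZMod p) * (Nat.factorial r : ZMod p) =
      ∏ i ∈ Finset.range r, (((p / 2 : ℕ) : ZMod p) - (i : ZMod p)) := by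
    have hdesc := congrArg (Nat.cast : ℕ → ZMod p)
      (Nat.descFactorial_eq_factorial_mul_choose (p / 2) r)
    rw [Nat.descFactorial_eq_prod_range] at hdesc
    push_cast at hdesc
    rw [mul_comm, ← hdesc]
    refine Finset.prod_congr rfl fun i hi => ?_
    have hi' : i < r := Finset.mem_range.mp hi
    have hsub : (p / 2 - i) + i = p / 2 := by omega
    have hc := congrArg (Nat.cast : ℕ → ZMod p) hsub
    push_cast at hc
    linear_combination hc
  have h2m : (2 : ZMod p) * ((p / 2 : ℕ) : ZMod p) = -1 := by
    have hc := congrArg (Nat.cast : ℕ → ZMod p) hmp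
    push_cast at hc
    rw [ZMod.natCast_self] at hc
    linear_combination hc
  calc ((2 * r).choose r : ZMod p) * (Nat.factorial r : ZMod p) =
      2 ^ r * ∏ i ∈ Finset.range r, (2 * i + 1 : ZMod p) := h1'
    _ = ∏ i ∈ Finset.range r, ((2 : ZMod p) * (2 * i + 1)) := by
        rw [Finset.prod_mul_distrib, Finset.prod_const, Finset.card_range]
    _ = ∏ i ∈ Finset.range r, ((-4 : ZMod p) * (((p / 2 : ℕ) : ZMod p) - i)) := by
        refine Finset.prod_congr rfl fun i hi => ?_
        have key : (-4 : ZMod p) * (((p / 2 : ℕ) : ZMod p) - i) =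
            (-2) * ((2 : ZMod p) * ((p / 2 : ℕ) : ZMod p)) + 4 * i := by ring
        rw [key, h2m]
        ring
    _ = (-4 : ZMod p) ^ r *
        ∏ i ∈ Finset.range r, (((p / 2 : ℕ) : ZMod p) - i) := by
        rw [Finset.prod_mul_distrib, Finset.prod_const, Finset.card_range]
    _ = (-4) ^ r * (((p / 2).choose r : ZMod p) * (Nat.factorial r : ZMod p)) := by
        rw [h2]
    _ = (-4) ^ r * ((p / 2).choose r : ZMod p) * (Nat.factorial r : ZMod p) := by
        ring

private lemma legendreSym3_eq {p : ℕ} [inst : Fact p.Prime] (hp2 : p ≠ 2)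
    (hp3 : p ≠ 3) : legendreSym p (-3) = leg3 (p : ℤ) := by
  have hp : p.Prime := inst.out
  haveI : Fact (Nat.Prime 3) := Fact.mk (by norm_num)
  have hmul : legendreSym p (-3) = legendreSym p (-1) * legendreSym p 3 := by
    rw [show (-3 : ℤ) = -1 * 3 by norm_num, legendreSym.mul]
  have hodd : p % 2 = 1 := hp.eq_two_or_odd.resolve_left hp2
  have hneg1 : legendreSym p (-1) = (-1) ^ (p / 2) := by
    rw [legendreSym.at_neg_one hp2, ZMod.χ₄_eq_neg_one_pow hodd]
  have hqr := legendreSym.quadratic_reciprocity' (p := 3) (q := p)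
    (by norm_num) hp2
  rw [show (3 : ℕ) / 2 = 1 by norm_num, one_mul,
    show ((3 : ℕ) : ℤ) = 3 from by norm_num] at hqr
  have h3p : legendreSym p (-3) = legendreSym 3 (p : ℤ) := by
    rw [hmul, hneg1, hqr, ← mul_assoc, ← pow_add]
    have hev : Even (p / 2 + p / 2) := ⟨p / 2, rfl⟩
    rw [hev.neg_one_pow, one_mul]
  rw [h3p, legendreSym.mod (p := 3), show ((3 : ℕ) : ℤ) = 3 from by norm_num]
  have h03 : ¬ (p % 3 = 0) := by
    intro h
    have h3 : (3 : ℕ) ∣ p := Nat.dvd_of_mod_eq_zero h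
    rcases (hp.eq_one_or_self_of_dvd 3 h3) with h' | h' <;> omega
  have h13 : p % 3 = 1 ∨ p % 3 = 2 := by omega
  rcases h13 with h | h
  · have hc : (p : ℤ) % 3 = 1 := by omega
    rw [hc]
    simp only [leg3, hc]
    norm_num
  · have hc : (p : ℤ) % 3 = 2 := by omega
    rw [hc]
    simp only [leg3, hc]
    norm_num

private lemma Sval_eq {p : ℕ} (hp : p.Prime) :
    Sval p = ((leg3 (p : ℤ) : ℤ) : ZMod p) := by
  haveI := Fact.mk hp
  by_cases hp2 : p = 2
  · subst hp2
    decide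
  by_cases hp3 : p = 3
  · subst hp3
    decide
  have hodd : p % 2 = 1 := hp.eq_two_or_odd.resolve_left hp2
  have hfilter : Finset.filter (fun r => 2 * r < p) (Finset.range p) =
      Finset.range (p / 2 + 1) := by
    ext x
    simp only [Finset.mem_filter, Finset.mem_range]
    omega
  have hS : Sval p = ∑ r ∈ Finset.range (p / 2 + 1), ((2 * r).choose r : ZMod p) := by
    rw [Sval, ← Finset.sum_filter, hfilter]
  have hS2 : Sval p = (-3 : ZMod p) ^ (p / 2) := by
    rw [hS]
    have hap := add_pow (-4 : ZMod p) 1 (p / 2)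
    simp only [one_pow, mul_one] at hap
    rw [show (-4 : ZMod p) + 1 = -3 by ring] at hap
    rw [hap]
    refine Finset.sum_congr rfl fun r hr => ?_
    exact central_eq hp hp2 (by have := Finset.mem_range.mp hr; omega)
  have hleg := legendreSym.eq_pow p (-3)
  rw [hS2, ← legendreSym3_eq hp2 hp3]
  rw [hleg]
  push_cast
  ring

/-- For a prime `p` and `a > 0`:
`1 + 2∑_{k=1}^{p^a-1} C(2k-1, k) ≡ (p^a/3) (mod p)`, equivalently
`∑_{k=0}^{p^a-1} C(2k, k) ≡ (p^a/3) (mod p)`. -/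
theorem stmt_11 (p : ℕ) (hp : p.Prime) (a : ℕ) (ha : 0 < a) :
    (1 + 2 * ∑ k ∈ Finset.Ico 1 (p ^ a), ((2 * k - 1).choose k : ℤ)) ≡
        leg3 ((p : ℤ) ^ a) [ZMOD p] ∧
    (∑ k ∈ Finset.range (p ^ a), ((2 * k).choose k : ℤ)) ≡
        leg3 ((p : ℤ) ^ a) [ZMOD p] := by
  haveI := Fact.mk hp
  have h2 : (∑ k ∈ Finset.range (p ^ a), ((2 * k).choose k : ℤ)) ≡
      leg3 ((p : ℤ) ^ a) [ZMOD p] := by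
    have hc : (Int.cast (∑ k ∈ Finset.range (p ^ a), ((2 * k).choose k : ℤ)) : ZMod p) =
        (Int.cast (leg3 ((p : ℤ) ^ a)) : ZMod p) := by
      rw [leg3_pow]
      push_cast
      rw [sum_central_pow hp a, Sval_eq hp]
    exact (ZMod.intCast_eq_intCast_iff _ _ _).mp hc
  refine ⟨?_, h2⟩
  have hEq : (1 + 2 * ∑ k ∈ Finset.Ico 1 (p ^ a), ((2 * k - 1).choose k : ℤ)) =
      ∑ k ∈ Finset.range (p ^ a), ((2 * k).choose k : ℤ) := by
    have hpos : (0 : ℕ) < p ^ a := pow_pos hp.pos a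
    have hterm : ∀ k ∈ Finset.Ico 1 (p ^ a),
        2 * ((2 * k - 1).choose k : ℤ) = ((2 * k).choose k : ℤ) := by
      intro k hk
      have hk1 : 1 ≤ k := (Finset.mem_Ico.mp hk).1
      have hnat : (2 * k).choose k = 2 * (2 * k - 1).choose k := by
        have h3 : (2 * k - 1).choose (k - 1) = (2 * k - 1).choose k := by
          have h := Nat.choose_symm (show k ≤ 2 * k - 1 by omega)
          rwa [show 2 * k - 1 - k = k - 1 by omega] at h
        have h4 : (2 * k - 1 + 1).choose (k - 1 + 1) =
            (2 * k - 1).choose (k - 1) + (2 * k - 1).choose (k - 1 + 1) :=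
          Nat.choose_succ_succ _ _
        rw [show 2 * k - 1 + 1 = 2 * k by omega, show k - 1 + 1 = k by omega] at h4
        rw [h4, h3]
        ring
      rw [hnat]
      push_cast
      ring
    rw [Finset.range_eq_Ico, Finset.sum_eq_sum_Ico_succ_bot hpos, Finset.mul_sum,
      Finset.sum_congr rfl hterm]
    norm_num
  rw [hEq]
  exact h2
end

section
/- For any prime p and integer a > 0, the sum of Catalan numbers satisfies ∑_{k=0}^{p^a - 1} C_k ≡ (1/2)(3·((p^a)/3) - 1) (mod p), where C_k = binom(2k,k)/(k+1) and (·/3) is the Legendre symbol mod 3. -/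
open Polynomial

/-- Auxiliary polynomial whose coefficients are sums of binomials. -/
noncomputable def PP (p n : ℕ) : Polynomial (ZMod p) :=
  ∑ k ∈ Finset.range n, (1 + X) ^ (2 * k) * X ^ (n - 1 - k)

/-- Period-3 pattern 1, -1, 0. -/
def tt3 (p m : ℕ) : ZMod p := if m % 3 = 0 then 1 else if m % 3 = 1 then -1 else 0

lemma PP_mul (p : ℕ) [Fact p.Prime] (a : ℕ) :
    (X ^ 2 + X + 1) * PP p (p ^ a)
      = 1 + X ^ (p ^ a) + (X : (ZMod p)[X]) ^ (2 * p ^ a) := by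
  have h := geom_sum₂_mul ((1 + X : (ZMod p)[X]) ^ 2) X (p ^ a)
  have h2 : PP p (p ^ a)
      = ∑ i ∈ Finset.range (p ^ a), ((1 + X : (ZMod p)[X]) ^ 2) ^ i * X ^ (p ^ a - 1 - i) := by
    unfold PP
    exact Finset.sum_congr rfl fun i _ => by rw [pow_mul]
  rw [← h2] at h
  have hfrob : ((1 : (ZMod p)[X]) + X) ^ (p ^ a) = 1 + X ^ (p ^ a) := by
    simpa using add_pow_char_pow (1 : (ZMod p)[X]) X p a
  have hx2 : ((X : (ZMod p)[X]) ^ (p ^ a)) ^ 2 = X ^ (2 * p ^ a) := by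
    rw [← pow_mul, Nat.mul_comm]
  calc (X ^ 2 + X + 1) * PP p (p ^ a)
      = PP p (p ^ a) * ((1 + X) ^ 2 - X) := by ring
    _ = ((1 + X) ^ 2) ^ (p ^ a) - X ^ (p ^ a) := h
    _ = ((1 + X) ^ (p ^ a)) ^ 2 - X ^ (p ^ a) := by rw [← pow_mul, ← pow_mul, Nat.mul_comm]
    _ = (1 + X ^ (p ^ a)) ^ 2 - X ^ (p ^ a) := by rw [hfrob]
    _ = 1 + X ^ (p ^ a) + X ^ (2 * p ^ a) := by rw [← hx2]; ring

lemma PP_rec (p : ℕ) [Fact p.Prime] (a d : ℕ) :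
    (PP p (p ^ a)).coeff (d + 2) + (PP p (p ^ a)).coeff (d + 1) + (PP p (p ^ a)).coeff d
      = (if d + 2 = p ^ a then 1 else 0) + (if d + 2 = 2 * p ^ a then 1 else 0) := by
  have h := congrArg (fun q : (ZMod p)[X] => q.coeff (d + 2)) (PP_mul p a)
  have e1 : (X ^ 2 + X + 1) * PP p (p ^ a)
      = X ^ 2 * PP p (p ^ a) + X * PP p (p ^ a) + PP p (p ^ a) := by ring
  rw [e1, Polynomial.coeff_add, Polynomial.coeff_add,
    Polynomial.coeff_X_pow_mul _ 2 d,
    show d + 2 = (d + 1) + 1 from rfl, Polynomial.coeff_X_mul] at h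
  rw [Polynomial.coeff_add, Polynomial.coeff_add, Polynomial.coeff_one,
    Polynomial.coeff_X_pow, Polynomial.coeff_X_pow] at h
  simp only [show d + 1 + 1 = d + 2 from rfl] at h
  rw [if_neg (by omega)] at h
  linear_combination h

lemma PP_c0 (p : ℕ) [Fact p.Prime] (a : ℕ) (ha : 0 < a) : (PP p (p ^ a)).coeff 0 = 1 := by
  have hp := (Fact.out : p.Prime)
  have hn2 : 2 ≤ p ^ a := by
    calc 2 ≤ p := hp.two_le
    _ ≤ p ^ a := Nat.le_self_pow (by omega) p
  have h := congrArg (fun q : (ZMod p)[X] => q.coeff 0) (PP_mul p a)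
  have hc : ((X : (ZMod p)[X]) ^ 2 + X + 1).coeff 0 = 1 := by
    simp
  rw [Polynomial.mul_coeff_zero, hc, one_mul] at h
  rw [Polynomial.coeff_add, Polynomial.coeff_add, Polynomial.coeff_one,
    Polynomial.coeff_X_pow, Polynomial.coeff_X_pow] at h
  rw [if_pos rfl, if_neg (by omega), if_neg (by omega)] at h
  simpa using h

lemma PP_c1 (p : ℕ) [Fact p.Prime] (a : ℕ) (ha : 0 < a) : (PP p (p ^ a)).coeff 1 = -1 := by
  have hp := (Fact.out : p.Prime)
  have hn2 : 2 ≤ p ^ a := by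
    calc 2 ≤ p := hp.two_le
    _ ≤ p ^ a := Nat.le_self_pow (by omega) p
  have h := congrArg (fun q : (ZMod p)[X] => q.coeff 1) (PP_mul p a)
  have e1 : (X ^ 2 + X + 1) * PP p (p ^ a)
      = X * (X * PP p (p ^ a)) + X * PP p (p ^ a) + PP p (p ^ a) := by ring
  rw [e1, Polynomial.coeff_add, Polynomial.coeff_add] at h
  rw [show (1:ℕ) = 0 + 1 from rfl, Polynomial.coeff_X_mul, Polynomial.coeff_X_mul] at h
  rw [Polynomial.mul_coeff_zero, Polynomial.coeff_X_zero, zero_mul] at h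
  rw [PP_c0 p a ha] at h
  rw [Polynomial.coeff_add, Polynomial.coeff_add, Polynomial.coeff_one,
    Polynomial.coeff_X_pow, Polynomial.coeff_X_pow] at h
  rw [if_neg (by omega), if_neg (by omega), if_neg (by omega)] at h
  linear_combination h

lemma PP_coeff_lt (p : ℕ) [Fact p.Prime] (a : ℕ) (ha : 0 < a) :
    ∀ m, m < p ^ a → (PP p (p ^ a)).coeff m = tt3 p m := by
  intro m
  induction m using Nat.strong_induction_on with
  | _ m ih =>
    intro hm
    match m with
    | 0 => simpa [tt3] using PP_c0 p a ha
    | 1 => simpa [tt3] using PP_c1 p a ha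
    | (d + 2) =>
      have h := PP_rec p a d
      rw [if_neg (by omega), if_neg (by omega)] at h
      rw [ih d (by omega) (by omega), ih (d + 1) (by omega) (by omega)] at h
      have hc : (PP p (p ^ a)).coeff (d + 2) = -tt3 p (d + 1) - tt3 p d := by
        linear_combination h
      rw [hc]
      have h3 : d % 3 = 0 ∨ d % 3 = 1 ∨ d % 3 = 2 := by omega
      rcases h3 with h3 | h3 | h3 <;>
        · unfold tt3
          rw [show (d + 2) % 3 = (d % 3 + 2) % 3 by omega,
            show (d + 1) % 3 = (d % 3 + 1) % 3 by omega, h3]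
          norm_num

lemma PP_coeff_sum (p n d : ℕ) (hn : 1 ≤ n) :
    (PP p n).coeff (n - 1 + d) = ∑ k ∈ Finset.range n, ((2 * k).choose (k + d) : ZMod p) := by
  unfold PP
  rw [Polynomial.finset_sum_coeff]
  refine Finset.sum_congr rfl fun k hk => ?_
  have hk' : k ≤ n - 1 := by
    have := Finset.mem_range.mp hk; omega
  rw [show n - 1 + d = (k + d) + (n - 1 - k) by omega, Polynomial.coeff_mul_X_pow,
    Polynomial.coeff_one_add_X_pow]

lemma catalan_int (k : ℕ) :
    (catalan k : ℤ) = (2 * k).choose k - (2 * k).choose (k + 1) := by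
  have h1 : (k + 1) * catalan k = (2 * k).choose k := by
    have := succ_mul_catalan_eq_centralBinom k
    rwa [Nat.centralBinom] at this
  have h2 : (2 * k).choose (k + 1) * (k + 1) = (2 * k).choose k * k := by
    have := Nat.choose_succ_right_eq (2 * k) k
    rwa [show 2 * k - k = k by omega] at this
  have hcancel : ((k : ℤ) + 1) * (catalan k : ℤ)
      = ((k : ℤ) + 1) * (((2 * k).choose k : ℤ) - ((2 * k).choose (k + 1) : ℤ)) := by
    have h1' : ((k : ℤ) + 1) * (catalan k : ℤ) = ((2 * k).choose k : ℤ) := by exact_mod_cast h1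
    have h2' : ((2 * k).choose (k + 1) : ℤ) * ((k : ℤ) + 1)
        = ((2 * k).choose k : ℤ) * k := by exact_mod_cast h2
    linear_combination h1' + h2'
  exact mul_left_cancel₀ (by positivity) hcancel

/-- For a prime `p` and `a > 0`:
`∑_{k=0}^{p^a-1} C_k ≡ (1/2)(3·(p^a/3) - 1) (mod p)`, stated with the
denominator `2` cleared. -/
theorem stmt_15 (p : ℕ) (hp : p.Prime) (a : ℕ) (ha : 0 < a) :
    (2 * ∑ k ∈ Finset.range (p ^ a), (catalan k : ℤ)) ≡
      3 * leg3 ((p : ℤ) ^ a) - 1 [ZMOD p] := by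
  haveI := Fact.mk hp
  rw [← ZMod.intCast_eq_intCast_iff]
  set n := p ^ a with hn
  have hn2 : 2 ≤ n := by
    calc 2 ≤ p := hp.two_le
    _ ≤ p ^ a := Nat.le_self_pow (by omega) p
  have hA : (PP p n).coeff (n - 1) = tt3 p (n - 1) :=
    PP_coeff_lt p a ha (n - 1) (by omega)
  have hB : (PP p n).coeff (n - 2) = tt3 p (n - 2) :=
    PP_coeff_lt p a ha (n - 2) (by omega)
  have hrec := PP_rec p a (n - 2)
  rw [show n - 2 + 2 = n by omega, show n - 2 + 1 = n - 1 by omega,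
    if_pos rfl, if_neg (by omega), hA, hB] at hrec
  have hPn : (PP p n).coeff n = 1 - tt3 p (n - 1) - tt3 p (n - 2) := by
    linear_combination hrec
  have hs0 : (PP p n).coeff (n - 1)
      = ∑ k ∈ Finset.range n, ((2 * k).choose (k + 0) : ZMod p) := by
    have := PP_coeff_sum p n 0 (by omega)
    rwa [show n - 1 + 0 = n - 1 by omega] at this
  have hs1 : (PP p n).coeff n
      = ∑ k ∈ Finset.range n, ((2 * k).choose (k + 1) : ZMod p) := by
    have := PP_coeff_sum p n 1 (by omega)
    rwa [show n - 1 + 1 = n by omega] at this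
  have hcat : (∑ k ∈ Finset.range n, (catalan k : ZMod p))
      = (PP p n).coeff (n - 1) - (PP p n).coeff n := by
    rw [hs0, hs1, ← Finset.sum_sub_distrib]
    refine Finset.sum_congr rfl fun k _ => ?_
    have h := congrArg (fun z : ℤ => (z : ZMod p)) (catalan_int k)
    push_cast at h
    simpa using h
  have hleg : ((p : ℤ)) ^ a = (n : ℤ) := by push_cast [hn]; ring
  push_cast
  rw [hcat, hA, hPn]
  have h3 : n % 3 = 0 ∨ n % 3 = 1 ∨ n % 3 = 2 := by omega
  rcases h3 with h3 | h3 | h3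
  · -- p = 3 case
    have hdvd3 : (3 : ℕ) ∣ n := by omega
    rw [hn] at hdvd3
    have hdvd : (3 : ℕ) ∣ p := Nat.prime_three.dvd_of_dvd_pow hdvd3
    have hp3 : p = 3 := ((Nat.prime_dvd_prime_iff_eq Nat.prime_three hp).mp hdvd).symm
    subst hp3
    have h30 : ((3 : ℤ)) ^ a % 3 = 0 := by
      have : (3 : ℤ) ∣ 3 ^ a := dvd_pow_self 3 (by omega)
      omega
    have hl : leg3 (((3 : ℕ) : ℤ) ^ a) = 0 := by
      rw [show ((3 : ℕ) : ℤ) = (3 : ℤ) by norm_num]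
      unfold leg3
      rw [h30]
      norm_num
    have e1 : tt3 3 (n - 1) = 0 := by
      unfold tt3
      rw [show (n - 1) % 3 = 2 by omega]
      norm_num
    have e2 : tt3 3 (n - 2) = -1 := by
      unfold tt3
      rw [show (n - 2) % 3 = 1 by omega]
      norm_num
    rw [hl, e1, e2, show (((0 : ℤ) : ZMod 3)) = 0 by norm_num]
    have h30' : (3 : ZMod 3) = 0 := by exact_mod_cast ZMod.natCast_self 3
    linear_combination (-1 : ZMod 3) * h30'
  · have hl : leg3 ((p : ℤ) ^ a) = 1 := by
      unfold leg3
      rw [hleg, show (n : ℤ) % 3 = 1 by omega]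
      norm_num
    rw [hl]
    unfold tt3
    rw [show (n - 1) % 3 = 0 by omega, show (n - 2) % 3 = 2 by omega]
    norm_num
  · have hl : leg3 ((p : ℤ) ^ a) = -1 := by
      unfold leg3
      rw [hleg, show (n : ℤ) % 3 = 2 by omega]
      norm_num
    rw [hl]
    unfold tt3
    rw [show (n - 1) % 3 = 1 by omega, show (n - 2) % 3 = 0 by omega]
    norm_num
end

section
/- For any prime p and integer a > 0, the alternating sum of Catalan numbers satisfies ∑_{k=0}^{p^a - 1} (-1)^k C_k ≡ (1/2)(5·((p^a)/5) - 3) (mod p), where (·/5) is the Legendre symbol mod 5. -/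
/-- The Legendre symbol mod 5 (the quadratic residues mod 5 are `1` and `4`). -/
def leg5 (m : ℤ) : ℤ :=
  if m % 5 = 0 then 0 else if m % 5 = 1 ∨ m % 5 = 4 then 1 else -1

open Finset Nat

namespace Stmt17Aux

/-! ### Integer identities for Catalan numbers -/

lemma two_catalan (n : ℕ) :
    (2 * catalan n : ℤ) = 4 * Nat.centralBinom n - Nat.centralBinom (n + 1) := by
  have h1 : ((n : ℤ) + 1) * Nat.centralBinom (n + 1) = 2 * (2 * n + 1) * Nat.centralBinom n := by
    exact_mod_cast Nat.succ_mul_centralBinom_succ n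
  have h2 : ((n : ℤ) + 1) * catalan n = Nat.centralBinom n := by
    exact_mod_cast succ_mul_catalan_eq_centralBinom n
  have hn : ((n : ℤ) + 1) ≠ 0 := by positivity
  apply mul_left_cancel₀ hn
  linear_combination h1 + 2 * h2

lemma sum_two_catalan (n : ℕ) :
    2 * ∑ k ∈ range n, (-1 : ℤ) ^ k * catalan k
      = 5 * ∑ k ∈ range n, (-1 : ℤ) ^ k * Nat.centralBinom k - 1
        + (-1) ^ n * Nat.centralBinom n := by
  induction n with
  | zero => simp [Nat.centralBinom]
  | succ n ih =>
    rw [Finset.sum_range_succ, Finset.sum_range_succ]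
    push_cast
    push_cast at ih
    linear_combination ih + ((-1 : ℤ)) ^ n * two_catalan n

lemma sum_range_mul_decomp {M p : ℕ} {β : Type*} [AddCommMonoid β] (f : ℕ → β) :
    ∑ k ∈ range (M * p), f k = ∑ i ∈ range M, ∑ j ∈ range p, f (i * p + j) := by
  induction M with
  | zero => simp
  | succ M ih =>
    rw [succ_mul, Finset.sum_range_add, ih, Finset.sum_range_succ]

section OddP
variable {p : ℕ} [hfp : Fact p.Prime]

lemma zmod_cast_of_modEq {x y : ℕ} (h : (x : ℤ) ≡ y [ZMOD p]) :
    ((x : ZMod p)) = (y : ZMod p) := by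
  have := (ZMod.intCast_eq_intCast_iff _ _ _).mpr h
  push_cast at this
  exact this

/-! ### Lucas-theorem consequences for central binomial coefficients -/

lemma cb_vanish {j : ℕ} (hj : j < p) (h : p ≤ 2 * j) :
    ((Nat.centralBinom j : ZMod p)) = 0 := by
  have hp0 : 0 < p := hfp.out.pos
  have hsub : 2 * j - p < p := by omega
  have hl0 := Choose.choose_modEq_choose_mod_mul_choose_div
    (p := p) (n := 2 * j) (k := j)
  have h1 : 2 * j % p = 2 * j - p := by
    rw [Nat.mod_eq_sub_mod h, Nat.mod_eq_of_lt hsub]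
  have h2 : 2 * j / p = 1 := by
    rw [Nat.div_eq_sub_div hp0 h, Nat.div_eq_of_lt hsub]
  have hz : Nat.choose (2 * j - p) j = 0 := Nat.choose_eq_zero_of_lt (by omega)
  rw [h1, h2, Nat.mod_eq_of_lt hj, Nat.div_eq_of_lt hj, hz] at hl0
  have := zmod_cast_of_modEq (p := p) hl0
  rw [Nat.centralBinom, this]
  push_cast
  ring

lemma cb_mul (i j : ℕ) (hj : j < p) :
    ((Nat.centralBinom (i * p + j) : ZMod p)) =
      Nat.centralBinom i * Nat.centralBinom j := by
  have hp0 : 0 < p := hfp.out.pos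
  have hl := Choose.choose_modEq_choose_mod_mul_choose_div
    (p := p) (n := 2 * (i * p + j)) (k := i * p + j)
  have hk1 : (i * p + j) % p = j := by
    rw [add_comm, Nat.add_mul_mod_self_right, Nat.mod_eq_of_lt hj]
  have hk2 : (i * p + j) / p = i := by
    rw [add_comm, Nat.add_mul_div_right _ _ hp0, Nat.div_eq_of_lt hj, zero_add]
  rcases lt_or_ge (2 * j) p with h | h
  · have hn : 2 * (i * p + j) = 2 * j + (2 * i) * p := by ring
    rw [hn] at hl
    have hn1 : (2 * j + (2 * i) * p) % p = 2 * j := by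
      rw [Nat.add_mul_mod_self_right, Nat.mod_eq_of_lt h]
    have hn2 : (2 * j + (2 * i) * p) / p = 2 * i := by
      rw [Nat.add_mul_div_right _ _ hp0, Nat.div_eq_of_lt h, zero_add]
    rw [hn1, hn2, hk1, hk2] at hl
    have := zmod_cast_of_modEq (p := p) hl
    rw [← hn] at this
    rw [Nat.centralBinom, Nat.centralBinom, Nat.centralBinom, this]
    push_cast
    ring
  · have hsub : 2 * j - p < p := by omega
    have hn : 2 * (i * p + j) = (2 * j - p) + (2 * i + 1) * p := by zify [h]; ring
    rw [hn] at hl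
    have hn1 : ((2 * j - p) + (2 * i + 1) * p) % p = 2 * j - p := by
      rw [Nat.add_mul_mod_self_right, Nat.mod_eq_of_lt hsub]
    have hn2 : ((2 * j - p) + (2 * i + 1) * p) / p = 2 * i + 1 := by
      rw [Nat.add_mul_div_right _ _ hp0, Nat.div_eq_of_lt hsub, zero_add]
    rw [hn1, hn2, hk1, hk2] at hl
    have hz : Nat.choose (2 * j - p) j = 0 := Nat.choose_eq_zero_of_lt (by omega)
    have hL := zmod_cast_of_modEq (p := p) hl
    rw [← hn, hz] at hL
    rw [Nat.centralBinom, hL, cb_vanish hj h]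
    push_cast
    ring

lemma S_pow (hp2 : p ≠ 2) (a : ℕ) :
    ∑ k ∈ range (p ^ a), ((-1 : ZMod p) ^ k * Nat.centralBinom k)
      = (∑ k ∈ range p, ((-1 : ZMod p) ^ k * Nat.centralBinom k)) ^ a := by
  have hodd : Odd p := hfp.out.odd_of_ne_two hp2
  have hneg : (-1 : ZMod p) ^ p = -1 := hodd.neg_one_pow
  induction a with
  | zero => simp
  | succ a ih =>
    rw [pow_succ, sum_range_mul_decomp, pow_succ, ← ih]
    rw [Finset.sum_mul_sum]
    refine Finset.sum_congr rfl fun i _ => Finset.sum_congr rfl fun j hj => ?_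
    rw [cb_mul i j (Finset.mem_range.mp hj), pow_add, pow_mul, ← pow_mul']
    rw [pow_mul, hneg]
    ring

lemma cb_pow_p (a : ℕ) : ((Nat.centralBinom (p ^ a) : ZMod p)) = 2 := by
  induction a with
  | zero => norm_num [Nat.centralBinom]
  | succ a ih =>
    have : p ^ (a + 1) = p ^ a * p + 0 := by ring
    rw [this, cb_mul (p := p) (p ^ a) 0 hfp.out.pos, ih, Nat.centralBinom_zero]
    norm_num

/-! ### The key factorial computation mod `p` -/

lemma factorial_ne_zero_zmod {n : ℕ} (hn : n < p) : ((n ! : ZMod p)) ≠ 0 := by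
  intro h
  rw [ZMod.natCast_eq_zero_iff] at h
  exact absurd ((Nat.Prime.dvd_factorial hfp.out).mp h) (by omega)

lemma nat_ne_zero_zmod {n : ℕ} (hn0 : 0 < n) (hn : n < p) : ((n : ZMod p)) ≠ 0 := by
  intro h
  rw [ZMod.natCast_eq_zero_iff] at h
  exact absurd (Nat.le_of_dvd hn0 h) (by omega)

lemma factorial_id {m : ℕ} (hm : p = 2 * m + 1) {j : ℕ} (hj : j ≤ m) :
    (((2 * j)! : ZMod p)) * ((m - j)! : ZMod p)
      = (-4) ^ j * ((m ! : ZMod p) * (j ! : ZMod p)) := by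
  have hp0 : (((2 * m + 1 : ℕ)) : ZMod p) = 0 := by rw [← hm]; exact ZMod.natCast_self p
  push_cast at hp0
  induction j with
  | zero => simp
  | succ j ih =>
    obtain ⟨r, hr⟩ := Nat.exists_eq_add_of_le hj
    have hj' : j ≤ m := by omega
    have ih' := ih hj'
    have hmj : m - j = r + 1 := by omega
    have hmj1 : m - (j + 1) = r := by omega
    rw [hmj] at ih'
    rw [hmj1]
    have hr1 : ((r : ZMod p) + 1) ≠ 0 := by
      have : ((r + 1 : ℕ) : ZMod p) ≠ 0 := nat_ne_zero_zmod (by omega) (by omega)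
      push_cast at this; exact this
    apply mul_right_cancel₀ hr1
    have e1 : (2 * (j + 1))! = (2 * j + 2) * ((2 * j + 1) * (2 * j)!) := by
      have : 2 * (j + 1) = (2 * j + 1) + 1 := by ring
      rw [this, Nat.factorial_succ, Nat.factorial_succ]
    have e2 : (r + 1)! = (r + 1) * r ! := Nat.factorial_succ r
    have e3 : (j + 1)! = (j + 1) * j ! := Nat.factorial_succ j
    have hmr : (m : ZMod p) = (j : ZMod p) + 1 + r := by
      rw [hr]; push_cast; ring
    rw [e1, e3]
    push_cast
    push_cast [e2] at ih'
    linear_combination ((2 * (j:ZMod p) + 2) * (2 * j + 1)) * ih'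
      + ((-4 : ZMod p)) ^ j * (m ! : ZMod p) * (j ! : ZMod p) * (2 * (j + 1)) * hp0
      + ((-4 : ZMod p)) ^ j * (m ! : ZMod p) * (j ! : ZMod p) * (2 * (j + 1)) * (-2) * hmr

lemma cb_eq_choose {m : ℕ} (hm : p = 2 * m + 1) {j : ℕ} (hj : j ≤ m) :
    ((Nat.centralBinom j : ZMod p)) = (-4) ^ j * (Nat.choose m j : ZMod p) := by
  have h1 : Nat.centralBinom j * j ! * j ! = (2 * j)! := by
    have := Nat.choose_mul_factorial_mul_factorial (show j ≤ 2 * j by omega)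
    rw [show 2 * j - j = j by omega] at this
    rw [Nat.centralBinom]; exact this
  have h2 : Nat.choose m j * j ! * (m - j)! = m ! := Nat.choose_mul_factorial_mul_factorial hj
  have key : ((Nat.centralBinom j : ZMod p)) * ((j ! : ZMod p) * (j ! : ZMod p) * ((m - j)! : ZMod p))
      = ((-4) ^ j * (Nat.choose m j : ZMod p)) * ((j ! : ZMod p) * (j ! : ZMod p) * ((m - j)! : ZMod p)) := by
    have c1 : ((Nat.centralBinom j : ZMod p)) * (j ! : ZMod p) * (j ! : ZMod p) = ((2 * j)! : ZMod p) := by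
      exact_mod_cast congrArg (Nat.cast : ℕ → ZMod p) h1
    have c2 : ((Nat.choose m j : ZMod p)) * (j ! : ZMod p) * ((m - j)! : ZMod p) = (m ! : ZMod p) := by
      exact_mod_cast congrArg (Nat.cast : ℕ → ZMod p) h2
    have c3 := factorial_id (p := p) hm hj
    linear_combination ((m - j)! : ZMod p) * c1 - ((-4 : ZMod p)) ^ j * (j ! : ZMod p) * c2 + c3
  have hne : ((j ! : ZMod p) * (j ! : ZMod p) * ((m - j)! : ZMod p)) ≠ 0 := by
    have a1 := factorial_ne_zero_zmod (p := p) (n := j) (by omega)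
    have a2 := factorial_ne_zero_zmod (p := p) (n := m - j) (by omega)
    exact mul_ne_zero (mul_ne_zero a1 a1) a2
  exact mul_right_cancel₀ hne key

lemma T_eq {m : ℕ} (hm : p = 2 * m + 1) :
    ∑ k ∈ range p, ((-1 : ZMod p) ^ k * Nat.centralBinom k) = (5 : ZMod p) ^ m := by
  have hsub : range (m + 1) ⊆ range p := by
    apply Finset.range_subset_range.mpr; omega
  rw [← Finset.sum_subset hsub (fun x hx hnx => by
    rw [Finset.mem_range] at hx
    rw [Finset.mem_range, not_lt] at hnx
    rw [cb_vanish hx (by omega), mul_zero])]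
  have : ∀ j ∈ range (m + 1), ((-1 : ZMod p) ^ j * Nat.centralBinom j)
      = (4 : ZMod p) ^ j * 1 ^ (m - j) * (Nat.choose m j : ZMod p) := by
    intro j hj
    rw [Finset.mem_range] at hj
    rw [cb_eq_choose hm (by omega), ← mul_assoc, ← mul_pow]
    norm_num
  rw [Finset.sum_congr rfl this, ← add_pow]
  norm_num

end OddP

/-! ### Legendre symbol facts -/

instance fact5 : Fact (Nat.Prime 5) := ⟨by norm_num⟩

lemma leg5_eq (m : ℤ) : leg5 m = legendreSym 5 m := by
  have h0 : (0 : ℤ) ≤ m % 5 := Int.emod_nonneg m (by norm_num)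
  have h1 : m % 5 < 5 := Int.emod_lt_of_pos m (by norm_num)
  have hmod : legendreSym 5 m = legendreSym 5 (m % 5) := by
    exact_mod_cast legendreSym.mod 5 m
  rw [hmod]
  unfold leg5
  have : m % 5 = 0 ∨ m % 5 = 1 ∨ m % 5 = 2 ∨ m % 5 = 3 ∨ m % 5 = 4 := by omega
  rcases this with h | h | h | h | h <;> rw [h] <;> norm_num

lemma leg5_pow (q : ℤ) (a : ℕ) : legendreSym 5 (q ^ a) = (legendreSym 5 q) ^ a := by
  induction a with
  | zero => simp [legendreSym.at_one]
  | succ a ih => rw [pow_succ, legendreSym.mul, ih, pow_succ]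

lemma legendre_five {p : ℕ} [hfp : Fact p.Prime] (hp2 : p ≠ 2) :
    ((legendreSym 5 (p : ℤ) : ℤ) : ZMod p) = (5 : ZMod p) ^ (p / 2) := by
  rw [← legendreSym.quadratic_reciprocity_one_mod_four (by norm_num : 5 % 4 = 1) hp2]
  have := legendreSym.eq_pow p 5
  push_cast at this ⊢
  exact this

end Stmt17Aux

open Stmt17Aux in
/-- For a prime `p` and `a > 0`:
`∑_{k=0}^{p^a-1} (-1)^k C_k ≡ (1/2)(5·(p^a/5) - 3) (mod p)`, stated with the
denominator `2` cleared. -/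
theorem stmt_17 (p : ℕ) (hp : p.Prime) (a : ℕ) (ha : 0 < a) :
    (2 * ∑ k ∈ Finset.range (p ^ a), (-1 : ℤ) ^ k * catalan k) ≡
      5 * leg5 ((p : ℤ) ^ a) - 3 [ZMOD p] := by
  rcases eq_or_ne p 2 with rfl | hp2
  · -- p = 2 : both sides are even
    push_cast
    have h5 : ¬ ((2 : ℤ) ^ a % 5 = 0) := by
      intro h
      have hdvd : (5 : ℤ) ∣ 2 ^ a := Int.dvd_of_emod_eq_zero h
      have := (Int.Prime.dvd_pow' (p := 5) (by norm_num) hdvd)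
      norm_num at this
    have : leg5 ((2 : ℤ) ^ a) = 1 ∨ leg5 ((2 : ℤ) ^ a) = -1 := by
      unfold leg5
      rw [if_neg h5]
      split_ifs <;> simp
    rcases this with h | h <;> rw [h] <;>
      · unfold Int.ModEq
        omega
  · haveI : Fact p.Prime := ⟨hp⟩
    have hodd : Odd p := hp.odd_of_ne_two hp2
    obtain ⟨m, hm0⟩ := id hodd
    have hm : p = 2 * m + 1 := by omega
    rw [← ZMod.intCast_eq_intCast_iff, sum_two_catalan (p ^ a), leg5_eq, leg5_pow]
    push_cast
    rw [S_pow hp2 a, T_eq hm, cb_pow_p, legendre_five hp2,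
        show p / 2 = m by omega]
    have hne : Odd (p ^ a) := hodd.pow
    rw [hne.neg_one_pow]
    ring
end
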